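/- Let G be a finite simple graph on vertex set [n] = {1,…,n} (n ≥ 2) with adjacency matrix A, eigenvalues λ_1 ≥ λ_2 ≥ … ≥ λ_n (with multiplicity), and λ = max(λ_2, |λ_n|); assume λ_1 ≥ 4λ. Let the vertices be 2-colored red and blue with fairness vector f, and let S be a fair subset with |S| = m ≥ 1 and normalized indicator χ. Assume, for some real d > 0 and ε, θ ≥ 0: (1) the induced subgraph G_S is (d, ε)-regular, and (2) d ≥ (1 − θ)·Δ, where Δ is the maximum degree of G. Let v̂_1 be a unit eigenvector of (I − f fᵀ) A (I − f fᵀ) for its largest eigenvalue, and set α = ⟨χ, v̂_1⟩. Then 1 − α² ≤ 4(ε + θ); equivalently, the squared distance from χ to its orthogonal projection onto the span of v̂_1 satisfies ‖χ − α v̂_1‖² ≤ 4(ε + θ). -/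

import Mathlib

open Matrix RealInnerProductSpace

/-- The eigenvalues of a real symmetric matrix, listed in nonincreasing order
(with multiplicity); the empty list for non-symmetric matrices. -/
noncomputable def sortedEigs {n : ℕ} (M : Matrix (Fin n) (Fin n) ℝ) : List ℝ :=
  if hM : M.IsHermitian then (Finset.univ.val.map hM.eigenvalues).sort (· ≥ ·) else []

namespace FI

lemma sortedEigs_def {n : ℕ} {M : Matrix (Fin n) (Fin n) ℝ} (hM : M.IsHermitian) :
    sortedEigs M = (Finset.univ.val.map hM.eigenvalues).sort (· ≥ ·) := dif_pos hM

lemma sorted_head_max {l : List ℝ} (hl : l.Pairwise (· ≥ ·)) {x : ℝ} (hx : x ∈ l) :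
    x ≤ l.getD 0 0 := by
  cases l with
  | nil => simp at hx
  | cons a t =>
    rw [List.pairwise_cons] at hl
    rcases List.mem_cons.mp hx with h | h
    · simp [h]
    · simpa using hl.1 x h

lemma eig_le_head {n : ℕ} {M : Matrix (Fin n) (Fin n) ℝ} (hM : M.IsHermitian) (k : Fin n) :
    hM.eigenvalues k ≤ (sortedEigs M).getD 0 0 := by
  rw [sortedEigs_def hM]
  refine sorted_head_max (Multiset.pairwise_sort _ _) ?_
  rw [Multiset.mem_sort]
  exact Multiset.mem_map.mpr ⟨k, Finset.mem_univ_val k, rfl⟩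

lemma exists_eig_head {n : ℕ} (hn : 1 ≤ n) {M : Matrix (Fin n) (Fin n) ℝ} (hM : M.IsHermitian) :
    ∃ k, hM.eigenvalues k = (sortedEigs M).getD 0 0 := by
  rw [sortedEigs_def hM]
  have hlen : ((Finset.univ.val.map hM.eigenvalues).sort (· ≥ ·)).length = n := by
    simp [Multiset.length_sort]
  have h0 : ((Finset.univ.val.map hM.eigenvalues).sort (· ≥ ·)).getD 0 0
      ∈ (Finset.univ.val.map hM.eigenvalues).sort (· ≥ ·) := by
    rw [List.getD_eq_getElem _ _ (by omega)]
    exact List.getElem_mem _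
  rw [Multiset.mem_sort, Multiset.mem_map] at h0
  obtain ⟨k, _, hk⟩ := h0
  exact ⟨k, hk⟩

lemma eig_le_second {n : ℕ} {M : Matrix (Fin n) (Fin n) ℝ} (hM : M.IsHermitian)
    {k1 k : Fin n} (hk : k ≠ k1) (hmax : ∀ j, hM.eigenvalues j ≤ hM.eigenvalues k1) :
    hM.eigenvalues k ≤ (sortedEigs M).getD 1 0 := by
  rw [sortedEigs_def hM]
  set μ := hM.eigenvalues
  set m' := ((Finset.univ.erase k1).val.map μ) with hm'
  have hsplit : (Finset.univ.val.map μ) = μ k1 ::ₘ m' := by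
    rw [hm', ← Multiset.map_cons]
    congr 1
    rw [Finset.erase_val]
    exact (Multiset.cons_erase (Finset.mem_univ_val k1)).symm
  have hperm : ((Finset.univ.val.map μ).sort (· ≥ ·)) = μ k1 :: (m'.sort (· ≥ ·)) := by
    refine (fun hp h2 => List.Perm.eq_of_pairwise' (Multiset.pairwise_sort _ _) h2 hp) ?_ ?_
    · rw [← Multiset.coe_eq_coe]
      rw [Multiset.sort_eq, hsplit, ← Multiset.cons_coe, Multiset.sort_eq]
    · rw [List.pairwise_cons]
      refine ⟨fun b hb => ?_, Multiset.pairwise_sort _ _⟩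
      rw [Multiset.mem_sort, hm', Multiset.mem_map] at hb
      obtain ⟨j, _, hj⟩ := hb
      rw [← hj]; exact hmax j
  rw [hperm]
  show μ k ≤ (m'.sort (· ≥ ·)).getD 0 0
  refine sorted_head_max (Multiset.pairwise_sort _ _) ?_
  rw [Multiset.mem_sort, hm', Multiset.mem_map]
  exact ⟨k, by rw [Finset.erase_val]; exact Multiset.mem_erase_of_ne hk |>.mpr (Finset.mem_univ_val k), rfl⟩

lemma spectral_package {n : ℕ} (M : Matrix (Fin n) (Fin n) ℝ) (hM : M.IsHermitian) :
    ∃ b : Fin n → (Fin n → ℝ),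
      (∀ i j, b i ⬝ᵥ b j = if i = j then 1 else 0) ∧
      (∀ i, M *ᵥ b i = hM.eigenvalues i • b i) ∧
      (∀ x y : Fin n → ℝ, x ⬝ᵥ y = ∑ i, (b i ⬝ᵥ x) * (b i ⬝ᵥ y)) := by
  refine ⟨fun i => ⇑(hM.eigenvectorBasis i), ?_, fun i => hM.mulVec_eigenvectorBasis i, ?_⟩
  · intro i j
    have h := orthonormal_iff_ite.mp hM.eigenvectorBasis.orthonormal i j
    have heq : (hM.eigenvectorBasis i : Fin n → ℝ) ⬝ᵥ (hM.eigenvectorBasis j : Fin n → ℝ)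
        = ⟪hM.eigenvectorBasis i, hM.eigenvectorBasis j⟫ := by
      simp [PiLp.inner_apply, RCLike.inner_apply, dotProduct, mul_comm]
    show hM.eigenvectorBasis i ⬝ᵥ hM.eigenvectorBasis j = _
    rw [heq, h]
  intro x y
  set e := (WithLp.equiv 2 (Fin n → ℝ)).symm with he
  have h1 : ∀ z : EuclideanSpace ℝ (Fin n), ∀ i, (hM.eigenvectorBasis i : Fin n → ℝ) ⬝ᵥ z
      = hM.eigenvectorBasis.repr z i := by
    intro z i
    rw [hM.eigenvectorBasis.repr_apply_apply]
    simp [EuclideanSpace.inner_eq_star_dotProduct, dotProduct, mul_comm]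
  have h3 : ∀ u v : EuclideanSpace ℝ (Fin n), ⟪u, v⟫ = ∑ i, u i * v i := by
    intro u v; simp [PiLp.inner_apply, RCLike.inner_apply, mul_comm]
  have key : x ⬝ᵥ y = ⟪e x, e y⟫ := by rw [h3]; rfl
  rw [key, ← hM.eigenvectorBasis.repr.inner_map_map (e x) (e y), h3]
  refine Finset.sum_congr rfl fun i _ => ?_
  rw [show hM.eigenvectorBasis.repr (e x) i = hM.eigenvectorBasis i ⬝ᵥ x from (h1 (e x) i).symm,
    show hM.eigenvectorBasis.repr (e y) i = hM.eigenvectorBasis i ⬝ᵥ y from (h1 (e y) i).symm]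

lemma dot_mulVec_symm {n : ℕ} {M : Matrix (Fin n) (Fin n) ℝ} (hM : Mᵀ = M)
    (x y : Fin n → ℝ) : x ⬝ᵥ (M *ᵥ y) = (M *ᵥ x) ⬝ᵥ y := by
  rw [dotProduct_mulVec, ← mulVec_transpose, hM]

lemma quad_expand {n : ℕ} {M : Matrix (Fin n) (Fin n) ℝ} (hM : Mᵀ = M)
    {μ : Fin n → ℝ} {b : Fin n → Fin n → ℝ}
    (heig : ∀ i, M *ᵥ b i = μ i • b i)
    (hpar : ∀ x y : Fin n → ℝ, x ⬝ᵥ y = ∑ i, (b i ⬝ᵥ x) * (b i ⬝ᵥ y)) (x : Fin n → ℝ) :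
    x ⬝ᵥ (M *ᵥ x) = ∑ i, μ i * (b i ⬝ᵥ x)^2 := by
  rw [hpar x (M *ᵥ x)]
  refine Finset.sum_congr rfl fun i _ => ?_
  have h : b i ⬝ᵥ (M *ᵥ x) = μ i * (b i ⬝ᵥ x) := by
    rw [dot_mulVec_symm hM, heig i, smul_dotProduct]; rfl
  rw [h]; ring

lemma quad_le {n : ℕ} {M : Matrix (Fin n) (Fin n) ℝ} (hM : Mᵀ = M)
    {μ : Fin n → ℝ} {b : Fin n → Fin n → ℝ}
    (heig : ∀ i, M *ᵥ b i = μ i • b i)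
    (hpar : ∀ x y : Fin n → ℝ, x ⬝ᵥ y = ∑ i, (b i ⬝ᵥ x) * (b i ⬝ᵥ y))
    (x : Fin n → ℝ) (c : ℝ)
    (hterm : ∀ i, μ i * (b i ⬝ᵥ x)^2 ≤ c * (b i ⬝ᵥ x)^2) :
    x ⬝ᵥ (M *ᵥ x) ≤ c * (x ⬝ᵥ x) := by
  rw [quad_expand hM heig hpar, hpar x x, Finset.mul_sum]
  refine Finset.sum_le_sum fun i _ => ?_
  calc μ i * (b i ⬝ᵥ x)^2 ≤ c * (b i ⬝ᵥ x)^2 := hterm i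
    _ = c * ((b i ⬝ᵥ x) * (b i ⬝ᵥ x)) := by ring

lemma dot_self_nonneg {n : ℕ} (x : Fin n → ℝ) : 0 ≤ x ⬝ᵥ x :=
  Finset.sum_nonneg fun i _ => mul_self_nonneg _

lemma P_mulVec {n : ℕ} (f x : Fin n → ℝ) :
    (1 - vecMulVec f f) *ᵥ x = x - (f ⬝ᵥ x) • f := by
  rw [sub_mulVec, one_mulVec]
  congr 1
  funext i
  simp only [mulVec, dotProduct, vecMulVec_apply, Pi.smul_apply, smul_eq_mul, Finset.sum_mul,
    Finset.mul_sum]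
  exact Finset.sum_congr rfl fun j _ => by ring

lemma P_transpose {n : ℕ} (f : Fin n → ℝ) :
    (1 - vecMulVec f f)ᵀ = 1 - vecMulVec f f := by
  funext i j
  simp [transpose_apply, vecMulVec_apply, mul_comm, Matrix.one_apply, eq_comm]

end FI

/-- `G` is a graph on `Fin n` (`n ≥ 2`) with adjacency matrix `A`,
eigenvalues `λ_1 ≥ … ≥ λ_n` and `lam = max (λ_2, |λ_n|)`; assume `λ_1 ≥ 4·lam`.
Vertices are 2-colored by `Red` with fairness vector `f`; `S` is a fair subset,
`|S| = m ≥ 1`, with normalized indicator `χ`.  Assume `G_S` is `(d,ε)`-regular and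
`d ≥ (1 − θ)·Δ` where `Δ` is the max degree of `G`.  If `v1` is a unit eigenvector
of `B = (I − f fᵀ) A (I − f fᵀ)` for its largest eigenvalue and `α = ⟨χ, v1⟩`,
then `1 − α² ≤ 4(ε + θ)`, equivalently `‖χ − α v1‖² ≤ 4(ε + θ)`. -/
theorem fair_indicator_close_to_top_eigenvector
    {n : ℕ} (hn : 2 ≤ n) (G : SimpleGraph (Fin n)) [DecidableRel G.Adj]
    (hgap : (sortedEigs (G.adjMatrix ℝ)).getD 0 0
        ≥ 4 * max ((sortedEigs (G.adjMatrix ℝ)).getD 1 0)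
            |(sortedEigs (G.adjMatrix ℝ)).getD (n-1) 0|)
    (Red : Finset (Fin n))
    (f : Fin n → ℝ)
    (hf : f = fun i => if i ∈ Red then 1 / Real.sqrt n else -(1 / Real.sqrt n))
    (S : Finset (Fin n)) (m : ℕ) (hm : S.card = m) (hm1 : 1 ≤ m)
    (hfair : (S ∩ Red).card = (S \ Red).card)
    (χ : Fin n → ℝ)
    (hχ : χ = fun i => if i ∈ S then 1 / Real.sqrt m else 0)
    (d ε θ : ℝ) (hd : 0 < d) (hε : 0 ≤ ε) (hθ : 0 ≤ θ)
    (hreg : ∀ i ∈ S, (1 - ε) * d ≤ ((S.filter (fun j => G.Adj i j)).card : ℝ) ∧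
        ((S.filter (fun j => G.Adj i j)).card : ℝ) ≤ (1 + ε) * d)
    (hdmax : d ≥ (1 - θ) * (G.maxDegree : ℝ))
    (v1 : Fin n → ℝ) (hv1 : v1 ⬝ᵥ v1 = 1)
    (heig : ((1 - vecMulVec f f) * G.adjMatrix ℝ * (1 - vecMulVec f f)).mulVec v1
        = ((sortedEigs ((1 - vecMulVec f f) * G.adjMatrix ℝ * (1 - vecMulVec f f))).getD 0 0)
            • v1) :
    1 - (χ ⬝ᵥ v1)^2 ≤ 4 * (ε + θ) ∧
    ∑ i, (χ i - (χ ⬝ᵥ v1) * v1 i)^2 ≤ 4 * (ε + θ) := by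
  classical
  have hn0 : (0:ℝ) < (n:ℝ) := by
    have : 0 < n := by omega
    exact_mod_cast this
  have hm0 : (0:ℝ) < (m:ℝ) := by
    have : 0 < m := hm1
    exact_mod_cast this
  have hsn : Real.sqrt n * Real.sqrt n = (n:ℝ) := Real.mul_self_sqrt (le_of_lt hn0)
  have hsm : Real.sqrt m * Real.sqrt m = (m:ℝ) := Real.mul_self_sqrt (le_of_lt hm0)
  have hsn0 : (0:ℝ) < Real.sqrt n := Real.sqrt_pos.mpr hn0
  have hsm0 : (0:ℝ) < Real.sqrt m := Real.sqrt_pos.mpr hm0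
  -- matrices
  set A := G.adjMatrix ℝ with hA_def
  set P := (1 - vecMulVec f f : Matrix (Fin n) (Fin n) ℝ) with hP_def
  set B := P * A * P with hB_def
  have hAt : Aᵀ = A := G.transpose_adjMatrix
  have hA : A.IsHermitian := by
    show Aᴴ = A
    have : Aᴴ = Aᵀ := by ext i j; simp [conjTranspose_apply, transpose_apply]
    rw [this, hAt]
  have hPt : Pᵀ = P := FI.P_transpose f
  have hPh : Pᴴ = P := by
    have : Pᴴ = Pᵀ := by ext i j; simp [conjTranspose_apply, transpose_apply]
    rw [this, hPt]
  have hB : B.IsHermitian := by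
    have h := Matrix.isHermitian_mul_mul_conjTranspose P hA
    rwa [hPh] at h
  have hBt : Bᵀ = B := by
    have h : Bᴴ = Bᵀ := by ext i j; simp [conjTranspose_apply, transpose_apply]
    rw [← h, hB.eq]
  -- eigen-quantities
  set lam1 := (sortedEigs A).getD 0 0 with hlam1_def
  set lam2 := (sortedEigs A).getD 1 0 with hlam2_def
  set lam := max lam2 |(sortedEigs A).getD (n-1) 0| with hlam_def
  set μ1 := (sortedEigs B).getD 0 0 with hμ1_def
  clear_value μ1 lam lam2 lam1 B P A
  have hlam2_le : lam2 ≤ lam := by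
    rw [hlam_def]; exact le_max_left _ _
  have hlam_nn : 0 ≤ lam := by
    rw [hlam_def]
    exact le_trans (abs_nonneg _) (le_max_right _ _)
  have hlam1_nn : 0 ≤ lam1 := by
    have : lam1 ≥ 4 * lam := hgap
    linarith
  have hlam_le : lam ≤ lam1 / 4 := by
    have : lam1 ≥ 4 * lam := hgap
    linarith
  -- spectral packages
  obtain ⟨bA, hbAo, hbAe, hbAp⟩ := FI.spectral_package A hA
  obtain ⟨bB, hbBo, hbBe, hbBp⟩ := FI.spectral_package B hB
  have hμA_le : ∀ k, hA.eigenvalues k ≤ lam1 := by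
    intro k; rw [hlam1_def]; exact FI.eig_le_head hA k
  have hμB_le : ∀ k, hB.eigenvalues k ≤ μ1 := by
    intro k; rw [hμ1_def]; exact FI.eig_le_head hB k
  obtain ⟨j1, hj1⟩ := FI.exists_eig_head (by omega) hA
  rw [← hlam1_def] at hj1
  have hj1max : ∀ j, hA.eigenvalues j ≤ hA.eigenvalues j1 := by
    rw [hj1]; exact hμA_le
  have hsecond : ∀ j, j ≠ j1 → hA.eigenvalues j ≤ lam2 := by
    intro j hj; rw [hlam2_def]; exact FI.eig_le_second hA hj hj1max
  -- P facts
  have hPx : ∀ x : Fin n → ℝ, P *ᵥ x = x - (f ⬝ᵥ x) • f := by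
    intro x; rw [hP_def]; exact FI.P_mulVec f x
  have hPdot : ∀ x y : Fin n → ℝ, x ⬝ᵥ (P *ᵥ y) = (P *ᵥ x) ⬝ᵥ y := FI.dot_mulVec_symm hPt
  -- basic vector identities
  have hff : f ⬝ᵥ f = 1 := by
    have h1 : f ⬝ᵥ f = ∑ _i : Fin n, 1/(n:ℝ) := by
      simp only [dotProduct, hf]
      refine Finset.sum_congr rfl fun i _ => ?_
      by_cases h : i ∈ Red <;>
        simp only [h, if_true, if_false, neg_mul_neg] <;>
        rw [div_mul_div_comm, one_mul, hsn]
    rw [h1, Finset.sum_const, Finset.card_univ, Fintype.card_fin, nsmul_eq_mul]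
    field_simp
  have hχχ : χ ⬝ᵥ χ = 1 := by
    have h1 : χ ⬝ᵥ χ = ∑ i, (if i ∈ S then 1/(m:ℝ) else 0) := by
      simp only [dotProduct, hχ]
      refine Finset.sum_congr rfl fun i _ => ?_
      by_cases h : i ∈ S <;> simp only [h, if_true, if_false, mul_zero]
      rw [div_mul_div_comm, one_mul, hsm]
    rw [h1, Finset.sum_ite_mem, Finset.univ_inter, Finset.sum_const, hm, nsmul_eq_mul]
    field_simp
  have hfχ : f ⬝ᵥ χ = 0 := by
    have h1 : f ⬝ᵥ χ = ∑ i ∈ Finset.univ ∩ S, f i * (1/Real.sqrt m) := by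
      simp only [dotProduct, hχ, mul_ite, mul_zero]
      rw [Finset.sum_ite_mem]
    have h2 : ∑ i ∈ S, f i = 0 := by
      rw [← Finset.sum_inter_add_sum_sdiff S Red f]
      have hr : ∑ i ∈ S ∩ Red, f i = (S ∩ Red).card * (1/Real.sqrt n) := by
        rw [Finset.sum_congr rfl (fun i hi => ?_), Finset.sum_const, nsmul_eq_mul]
        rw [hf]
        exact if_pos (Finset.mem_inter.mp hi).2
      have hb : ∑ i ∈ S \ Red, f i = (S \ Red).card * (-(1/Real.sqrt n)) := by
        rw [Finset.sum_congr rfl (fun i hi => ?_), Finset.sum_const, nsmul_eq_mul]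
        rw [hf]
        exact if_neg (Finset.mem_sdiff.mp hi).2
      rw [hr, hb, hfair]; ring
    rw [h1, Finset.univ_inter, ← Finset.sum_mul, h2, zero_mul]
  have hχv : χ ⬝ᵥ v1 = v1 ⬝ᵥ χ := dotProduct_comm _ _
  -- P contracts norms
  have hPnorm : ∀ x : Fin n → ℝ, (P *ᵥ x) ⬝ᵥ (P *ᵥ x) ≤ x ⬝ᵥ x := by
    intro x
    rw [hPx x]
    have expand : (x - (f ⬝ᵥ x) • f) ⬝ᵥ (x - (f ⬝ᵥ x) • f)
        = x ⬝ᵥ x - 2 * (f ⬝ᵥ x) * (x ⬝ᵥ f) + (f ⬝ᵥ x)^2 * (f ⬝ᵥ f) := by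
      rw [sub_dotProduct, dotProduct_sub, dotProduct_sub, smul_dotProduct, smul_dotProduct,
        dotProduct_smul, dotProduct_smul]
      simp only [smul_eq_mul]
      rw [dotProduct_comm f x]
      ring
    rw [expand, hff, dotProduct_comm x f]
    linarith [sq_nonneg (f ⬝ᵥ x)]
  have hPχ : P *ᵥ χ = χ := by rw [hPx, hfχ]; simp
  -- B quadratic form
  have hBAP : ∀ x y : Fin n → ℝ, x ⬝ᵥ (B *ᵥ y) = (P *ᵥ x) ⬝ᵥ (A *ᵥ (P *ᵥ y)) := by
    intro x y
    rw [hB_def, ← Matrix.mulVec_mulVec, ← Matrix.mulVec_mulVec, hPdot]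
  have hχBA : χ ⬝ᵥ (B *ᵥ χ) = χ ⬝ᵥ (A *ᵥ χ) := by rw [hBAP, hPχ]
  -- lower bound on χᵀAχ
  have hE : (1-ε)*d ≤ χ ⬝ᵥ (A *ᵥ χ) := by
    have hstep : ∀ i : Fin n, (A *ᵥ χ) i
        = ((S.filter (fun j => G.Adj i j)).card : ℝ) * (1/Real.sqrt m) := by
      intro i
      rw [hA_def, SimpleGraph.adjMatrix_mulVec_apply, hχ]
      beta_reduce
      rw [Finset.sum_ite_mem, Finset.sum_const, nsmul_eq_mul]
      have hset : G.neighborFinset i ∩ S = S.filter (fun j => G.Adj i j) := by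
        ext u
        simp only [Finset.mem_inter, SimpleGraph.mem_neighborFinset, Finset.mem_filter]
        tauto
      rw [hset]
    have h1 : χ ⬝ᵥ (A *ᵥ χ) = ∑ i,
        (if i ∈ S then ((S.filter (fun j => G.Adj i j)).card : ℝ) * (1/(m:ℝ)) else 0) := by
      rw [show χ ⬝ᵥ (A *ᵥ χ) = ∑ i, χ i * (A *ᵥ χ) i from rfl]
      refine Finset.sum_congr rfl fun i _ => ?_
      rw [hstep i]
      by_cases h : i ∈ S
      · rw [if_pos h, hχ]
        beta_reduce
        rw [if_pos h]
        rw [show (1/Real.sqrt m) * (((S.filter (fun j => G.Adj i j)).card : ℝ) * (1/Real.sqrt m))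
          = ((S.filter (fun j => G.Adj i j)).card : ℝ) * ((1/Real.sqrt m)*(1/Real.sqrt m)) from by
            ring, div_mul_div_comm, one_mul, hsm]
      · rw [if_neg h, hχ]
        beta_reduce
        rw [if_neg h, zero_mul]
    rw [h1, Finset.sum_ite_mem, Finset.univ_inter]
    have h2 : ∀ i ∈ S, (1-ε)*d * (1/(m:ℝ))
        ≤ ((S.filter (fun j => G.Adj i j)).card : ℝ) * (1/(m:ℝ)) := by
      intro i hi
      exact mul_le_mul_of_nonneg_right (hreg i hi).1 (by positivity)
    calc (1-ε)*d = ∑ _i ∈ S, (1-ε)*d * (1/(m:ℝ)) := by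
          rw [Finset.sum_const, hm, nsmul_eq_mul]; field_simp
      _ ≤ _ := Finset.sum_le_sum h2
  -- Rayleigh bounds
  have hχAχ_le : χ ⬝ᵥ (A *ᵥ χ) ≤ lam1 := by
    have := FI.quad_le hAt hbAe hbAp χ lam1
      (fun i => mul_le_mul_of_nonneg_right (hμA_le i) (sq_nonneg _))
    rwa [hχχ, mul_one] at this
  have hv1B : v1 ⬝ᵥ (B *ᵥ v1) = μ1 := by
    rw [heig, dotProduct_smul, smul_eq_mul, hv1, mul_one]
  have hμ1_le : μ1 ≤ lam1 := by
    rw [← hv1B, hBAP]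
    calc (P *ᵥ v1) ⬝ᵥ (A *ᵥ (P *ᵥ v1)) ≤ lam1 * ((P *ᵥ v1) ⬝ᵥ (P *ᵥ v1)) :=
          FI.quad_le hAt hbAe hbAp _ lam1
            (fun i => mul_le_mul_of_nonneg_right (hμA_le i) (sq_nonneg _))
      _ ≤ lam1 * (v1 ⬝ᵥ v1) := mul_le_mul_of_nonneg_left (hPnorm v1) hlam1_nn
      _ = lam1 := by rw [hv1, mul_one]
  -- v1's coefficients
  have hck : ∀ k, hB.eigenvalues k * (bB k ⬝ᵥ v1) = μ1 * (bB k ⬝ᵥ v1) := by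
    intro k
    have h1 : bB k ⬝ᵥ (B *ᵥ v1) = hB.eigenvalues k * (bB k ⬝ᵥ v1) := by
      rw [FI.dot_mulVec_symm hBt, hbBe, smul_dotProduct]; rfl
    have h2 : bB k ⬝ᵥ (B *ᵥ v1) = μ1 * (bB k ⬝ᵥ v1) := by
      rw [heig, dotProduct_smul]; rfl
    rw [← h1, h2]
  obtain ⟨k1, hk1⟩ : ∃ k, bB k ⬝ᵥ v1 ≠ 0 := by
    by_contra hcon
    push_neg at hcon
    have : v1 ⬝ᵥ v1 = 0 := by
      rw [hbBp v1 v1]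
      exact Finset.sum_eq_zero fun k _ => by rw [hcon k, zero_mul]
    rw [hv1] at this; norm_num at this
  have hμk1 : hB.eigenvalues k1 = μ1 := mul_right_cancel₀ hk1 (hck k1)
  -- second eigenvalue of B
  have hk1ne : (Finset.univ.erase k1).Nonempty := by
    obtain ⟨k, hkne⟩ := Fintype.exists_ne_of_one_lt_card (by simp; omega) k1
    exact ⟨k, Finset.mem_erase.mpr ⟨hkne, Finset.mem_univ k⟩⟩
  obtain ⟨k2, hk2mem, hk2max⟩ := Finset.exists_max_image (Finset.univ.erase k1)
    hB.eigenvalues hk1ne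
  have hk2ne : k2 ≠ k1 := (Finset.mem_erase.mp hk2mem).1
  set ν := hB.eigenvalues k2 with hν_def
  have hν_le_μ1 : ν ≤ μ1 := hμB_le k2
  -- the span argument : ν ≤ lam
  have hν_le_lam : ν ≤ lam := by
    set q := P *ᵥ (bA j1) with hq_def
    set s1 := bB k1 ⬝ᵥ q with hs1_def
    set s2 := bB k2 ⬝ᵥ q with hs2_def
    obtain ⟨a, c, hac, haq⟩ : ∃ a c : ℝ, 0 < a^2 + c^2 ∧ a * s1 + c * s2 = 0 := by
      by_cases hzz : s1 = 0 ∧ s2 = 0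
      · exact ⟨0, 1, by norm_num, by rw [hzz.1, hzz.2]; ring⟩
      · refine ⟨-s2, s1, ?_, by ring⟩
        refine lt_of_le_of_ne (add_nonneg (sq_nonneg _) (sq_nonneg _)) (fun h0 => hzz ?_)
        obtain ⟨h1, h2⟩ := (add_eq_zero_iff_of_nonneg (sq_nonneg _) (sq_nonneg _)).mp h0.symm
        rw [neg_sq] at h1
        exact ⟨sq_eq_zero_iff.mp h2, sq_eq_zero_iff.mp h1⟩
    set x := a • bB k1 + c • bB k2 with hx_def
    have hdot_exp : ∀ y : Fin n → ℝ, x ⬝ᵥ y = a * (bB k1 ⬝ᵥ y) + c * (bB k2 ⬝ᵥ y) := by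
      intro y
      rw [hx_def, add_dotProduct, smul_dotProduct, smul_dotProduct]; rfl
    have hxq : x ⬝ᵥ q = 0 := by rw [hdot_exp q]; exact haq
    have hxx : x ⬝ᵥ x = a^2 + c^2 := by
      rw [hdot_exp x, hx_def]
      rw [dotProduct_add, dotProduct_add, dotProduct_smul, dotProduct_smul,
        dotProduct_smul, dotProduct_smul]
      rw [hbBo k1 k1, hbBo k1 k2, hbBo k2 k1, hbBo k2 k2]
      rw [if_pos rfl, if_pos rfl, if_neg (Ne.symm hk2ne), if_neg hk2ne]
      simp only [smul_eq_mul]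
      ring
    have hBx : B *ᵥ x = (a * hB.eigenvalues k1) • bB k1 + (c * ν) • bB k2 := by
      rw [hx_def, Matrix.mulVec_add, Matrix.mulVec_smul, Matrix.mulVec_smul, hbBe, hbBe,
        smul_smul, smul_smul]
    have hxBx : x ⬝ᵥ (B *ᵥ x) = hB.eigenvalues k1 * a^2 + ν * c^2 := by
      rw [hBx, hdot_exp]
      rw [dotProduct_add, dotProduct_add, dotProduct_smul, dotProduct_smul,
        dotProduct_smul, dotProduct_smul]
      rw [hbBo k1 k1, hbBo k1 k2, hbBo k2 k1, hbBo k2 k2]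
      rw [if_pos rfl, if_pos rfl, if_neg (Ne.symm hk2ne), if_neg hk2ne]
      simp only [smul_eq_mul]
      ring
    have hlower : ν * (a^2 + c^2) ≤ x ⬝ᵥ (B *ᵥ x) := by
      rw [hxBx, hμk1]
      have h1 : ν * a^2 ≤ μ1 * a^2 := mul_le_mul_of_nonneg_right hν_le_μ1 (sq_nonneg a)
      linarith
    have hterm : ∀ i, hA.eigenvalues i * (bA i ⬝ᵥ (P *ᵥ x))^2
        ≤ lam2 * (bA i ⬝ᵥ (P *ᵥ x))^2 := by
      intro i
      by_cases hi : i = j1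
      · subst hi
        have hzero : bA i ⬝ᵥ (P *ᵥ x) = 0 := by
          rw [hPdot (bA i) x, ← hq_def, ← hxq, dotProduct_comm]
        rw [hzero]
        norm_num
      · exact mul_le_mul_of_nonneg_right (hsecond i hi) (sq_nonneg _)
    have hupper : x ⬝ᵥ (B *ᵥ x) ≤ lam * (a^2 + c^2) := by
      rw [hBAP]
      calc (P *ᵥ x) ⬝ᵥ (A *ᵥ (P *ᵥ x)) ≤ lam2 * ((P *ᵥ x) ⬝ᵥ (P *ᵥ x)) :=
            FI.quad_le hAt hbAe hbAp _ lam2 hterm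
        _ ≤ lam * ((P *ᵥ x) ⬝ᵥ (P *ᵥ x)) :=
            mul_le_mul_of_nonneg_right hlam2_le (FI.dot_self_nonneg _)
        _ ≤ lam * (x ⬝ᵥ x) := mul_le_mul_of_nonneg_left (hPnorm x) hlam_nn
        _ = lam * (a^2 + c^2) := by rw [hxx]
    have := le_trans hlower hupper
    exact le_of_mul_le_mul_right (by linarith [this]) hac
  -- decomposition of χ
  set α := χ ⬝ᵥ v1 with hα_def
  set w := χ - α • v1 with hw_def
  have hwi : ∀ i, w i = χ i - α * v1 i := fun i => rfl
  have hv1w : v1 ⬝ᵥ w = 0 := by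
    rw [hw_def, dotProduct_sub, dotProduct_smul, smul_eq_mul, hv1, mul_one,
      dotProduct_comm v1 χ, ← hα_def, sub_self]
  have hww : w ⬝ᵥ w = 1 - α^2 := by
    rw [hw_def, sub_dotProduct, dotProduct_sub, dotProduct_sub, smul_dotProduct,
      smul_dotProduct, dotProduct_smul, dotProduct_smul]
    simp only [smul_eq_mul]
    rw [hχχ, hv1, dotProduct_comm v1 χ, ← hα_def]
    ring
  have hβ_nn : 0 ≤ 1 - α^2 := hww ▸ FI.dot_self_nonneg w
  -- w's Rayleigh bound
  have hwBw : w ⬝ᵥ (B *ᵥ w) ≤ ν * (1 - α^2) := by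
    rw [← hww]
    by_cases hmul : ∃ k, k ≠ k1 ∧ hB.eigenvalues k = μ1
    · obtain ⟨k', hk'ne, hk'⟩ := hmul
      have hνμ : ν = μ1 := le_antisymm hν_le_μ1 (by
        rw [← hk']
        exact hk2max k' (Finset.mem_erase.mpr ⟨hk'ne, Finset.mem_univ k'⟩))
      refine FI.quad_le hBt hbBe hbBp w ν (fun i => ?_)
      exact mul_le_mul_of_nonneg_right (hνμ ▸ hμB_le i) (sq_nonneg _)
    · push_neg at hmul
      have hzero : ∀ k, k ≠ k1 → bB k ⬝ᵥ v1 = 0 := by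
        intro k hk
        by_contra hne
        exact hmul k hk (mul_right_cancel₀ hne (hck k))
      have hbk1w : bB k1 ⬝ᵥ w = 0 := by
        have h0 : (0:ℝ) = ∑ k, (bB k ⬝ᵥ v1) * (bB k ⬝ᵥ w) := by
          rw [← hbBp v1 w, hv1w]
        rw [Finset.sum_eq_single k1 (fun k _ hk => by rw [hzero k hk, zero_mul])
          (fun h => absurd (Finset.mem_univ k1) h)] at h0
        exact (mul_eq_zero.mp h0.symm).resolve_left hk1
      refine FI.quad_le hBt hbBe hbBp w ν (fun i => ?_)
      by_cases hi : i = k1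
      · subst hi; rw [hbk1w]; norm_num
      · exact mul_le_mul_of_nonneg_right
          (hk2max i (Finset.mem_erase.mpr ⟨hi, Finset.mem_univ i⟩)) (sq_nonneg _)
  -- main energy identity
  have hχ_dec : χ = α • v1 + w := by rw [hw_def]; abel
  have hχBχ_eq : χ ⬝ᵥ (B *ᵥ χ) = α^2 * μ1 + w ⬝ᵥ (B *ᵥ w) := by
    have hBw0 : v1 ⬝ᵥ (B *ᵥ w) = 0 := by
      rw [FI.dot_mulVec_symm hBt, heig, smul_dotProduct, smul_eq_mul, hv1w, mul_zero]
    have hwv1 : w ⬝ᵥ v1 = 0 := by rw [dotProduct_comm]; exact hv1w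
    have hBχ : B *ᵥ χ = (α * μ1) • v1 + B *ᵥ w := by
      conv_lhs => rw [hχ_dec]
      rw [Matrix.mulVec_add, Matrix.mulVec_smul, heig, smul_smul]
    have h1 : v1 ⬝ᵥ (B *ᵥ χ) = μ1 * α := by
      rw [hBχ, dotProduct_add, dotProduct_smul, hBw0, add_zero, smul_eq_mul, hv1, mul_one]
      ring
    have h2 : w ⬝ᵥ (B *ᵥ χ) = w ⬝ᵥ (B *ᵥ w) := by
      rw [hBχ, dotProduct_add, dotProduct_smul, smul_eq_mul, hwv1, mul_zero, zero_add]
    calc χ ⬝ᵥ (B *ᵥ χ) = α * (v1 ⬝ᵥ (B *ᵥ χ)) + w ⬝ᵥ (B *ᵥ χ) := by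
          nth_rewrite 1 [hχ_dec]
          rw [add_dotProduct, smul_dotProduct, smul_eq_mul]
      _ = α^2 * μ1 + w ⬝ᵥ (B *ᵥ w) := by rw [h1, h2]; ring
  -- conclusion
  have hsum_eq : ∑ i, (χ i - α * v1 i)^2 = w ⬝ᵥ w := by
    rw [show w ⬝ᵥ w = ∑ i, w i * w i from rfl]
    exact Finset.sum_congr rfl fun i _ => by rw [hwi i]; ring
  suffices hmain : 1 - α^2 ≤ 4 * (ε + θ) by
    refine ⟨hmain, ?_⟩
    rw [hsum_eq, hww]
    exact hmain
  by_cases hc : (1:ℝ)/4 ≤ ε + θ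
  · linarith [sq_nonneg α]
  push_neg at hc
  have hε1 : ε < 1 := by linarith
  have hχAχ_pos : 0 < χ ⬝ᵥ (A *ᵥ χ) :=
    lt_of_lt_of_le (mul_pos (by linarith) hd) hE
  have hlam1_pos : 0 < lam1 := lt_of_lt_of_le hχAχ_pos hχAχ_le
  have hΔnn : (0:ℝ) ≤ (G.maxDegree : ℝ) := Nat.cast_nonneg _
  -- lam1 ≤ Δ
  have hΔ : lam1 ≤ (G.maxDegree : ℝ) := by
    set u := bA j1 with hu_def
    have hu_eig : A *ᵥ u = lam1 • u := by rw [hbAe j1, hj1]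
    have hu_unit : u ⬝ᵥ u = 1 := by
      have := hbAo j1 j1
      rwa [if_pos rfl] at this
    obtain ⟨i0, _, hi0⟩ := Finset.exists_max_image Finset.univ (fun i => |u i|)
      ⟨⟨0, by omega⟩, Finset.mem_univ _⟩
    have hi0pos : 0 < |u i0| := by
      rcases lt_or_ge 0 (|u i0|) with h | h
      · exact h
      · exfalso
        have hz : ∀ j, u j = 0 := by
          intro j
          have := hi0 j (Finset.mem_univ j)
          have : |u j| ≤ 0 := le_trans this h
          simpa [abs_nonpos_iff] using this
        rw [show u ⬝ᵥ u = ∑ i, u i * u i from rfl] at hu_unit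
        simp only [hz, mul_zero, Finset.sum_const_zero] at hu_unit
        norm_num at hu_unit
    have hval : (A *ᵥ u) i0 = lam1 * u i0 := by rw [hu_eig]; rfl
    have habs : lam1 * |u i0| ≤ (G.maxDegree : ℝ) * |u i0| := by
      have h1 : |lam1 * u i0| = |(A *ᵥ u) i0| := by rw [hval]
      have h2 : |(A *ᵥ u) i0| ≤ (G.degree i0 : ℝ) * |u i0| := by
        rw [hA_def, SimpleGraph.adjMatrix_mulVec_apply]
        calc |∑ j ∈ G.neighborFinset i0, u j| ≤ ∑ j ∈ G.neighborFinset i0, |u j| :=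
              Finset.abs_sum_le_sum_abs _ _
          _ ≤ ∑ _j ∈ G.neighborFinset i0, |u i0| :=
              Finset.sum_le_sum fun j _ => hi0 j (Finset.mem_univ j)
          _ = (G.degree i0 : ℝ) * |u i0| := by
              rw [Finset.sum_const, nsmul_eq_mul, SimpleGraph.card_neighborFinset_eq_degree]
      have h3 : (G.degree i0 : ℝ) ≤ (G.maxDegree : ℝ) :=
        Nat.cast_le.mpr (G.degree_le_maxDegree i0)
      calc lam1 * |u i0| = |lam1| * |u i0| := by rw [abs_of_nonneg hlam1_nn]
        _ = |lam1 * u i0| := (abs_mul _ _).symm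
        _ ≤ (G.degree i0 : ℝ) * |u i0| := h1 ▸ h2
        _ ≤ (G.maxDegree : ℝ) * |u i0| := mul_le_mul_of_nonneg_right h3 (abs_nonneg _)
    exact le_of_mul_le_mul_right habs hi0pos
  -- chain of inequalities
  have hchain : (1 - ε - θ) * lam1 ≤ χ ⬝ᵥ (A *ᵥ χ) := by
    have c1 : (1-ε)*((1-θ)*(G.maxDegree:ℝ)) ≤ (1-ε)*d :=
      mul_le_mul_of_nonneg_left hdmax (by linarith)
    have c2 : (1-ε-θ)*(G.maxDegree:ℝ) ≤ (1-ε)*((1-θ)*(G.maxDegree:ℝ)) := by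
      linarith [mul_nonneg (mul_nonneg hε hθ) hΔnn]
    have c3 : (1-ε-θ)*lam1 ≤ (1-ε-θ)*(G.maxDegree:ℝ) :=
      mul_le_mul_of_nonneg_left hΔ (by linarith)
    linarith
  have hfinal : (1 - ε - θ) * lam1 ≤ α^2 * lam1 + (lam1/4) * (1 - α^2) := by
    calc (1 - ε - θ) * lam1 ≤ χ ⬝ᵥ (A *ᵥ χ) := hchain
      _ = χ ⬝ᵥ (B *ᵥ χ) := hχBA.symm
      _ = α^2 * μ1 + w ⬝ᵥ (B *ᵥ w) := hχBχ_eq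
      _ ≤ α^2 * lam1 + ν * (1 - α^2) := by
          have h1 : α^2 * μ1 ≤ α^2 * lam1 := mul_le_mul_of_nonneg_left hμ1_le (sq_nonneg _)
          linarith [hwBw]
      _ ≤ α^2 * lam1 + (lam1/4) * (1 - α^2) := by
          have h2 : ν * (1 - α^2) ≤ (lam1/4) * (1 - α^2) :=
            mul_le_mul_of_nonneg_right (le_trans hν_le_lam hlam_le) hβ_nn
          linarith
  have hkey : lam1 * (3/4 * (1 - α^2)) ≤ lam1 * (ε + θ) := by linarith [hfinal]
  have := le_of_mul_le_mul_left hkey hlam1_pos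
  linarith
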